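/- For all real s with 0 ≤ s ≤ 2π, one has 0 ≤ 2(1 − cos s)/s² ≤ e^{−s²/12}, where the expression 2(1 − cos s)/s² is assigned its limiting value 1 at s = 0. -/

import Mathlib

/-!
With `x = s / 2` the half-angle formula gives `2 (1 - cos s) / s² = (sin x / x)²`, so it suffices
to show `sin x ≤ x e^{-x²/6}` on `[0, π]`. For `x ≤ 2.7` compare the Taylor bound
`sin x ≤ x - x³/6 + x⁵/120` with `e^{-x²/6} ≥ (1 - x²/24)⁴`; near `π` the crude bounds
`sin x ≤ π - x ≤ 0.45` and `e^{-x²/6} ≥ e^{-π²/6} ≥ 0.17` already suffice.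
-/

open Real

theorem le_of_deriv_nonneg_of_le {f : ℝ → ℝ} {a x : ℝ} (hf : Differentiable ℝ f)
    (hf' : ∀ y ∈ Set.Ioi a, 0 ≤ deriv f y) (hx : a ≤ x) : f a ≤ f x :=
  monotoneOn_of_deriv_nonneg (convex_Ici a) hf.continuous.continuousOn hf.differentiableOn
    (by simpa only [interior_Ici] using hf') Set.self_mem_Ici hx hx

theorem cos_le_taylor_quartic {x : ℝ} (hx : 0 ≤ x) : cos x ≤ 1 - x ^ 2 / 2 + x ^ 4 / 24 := by
  have hmono := le_of_deriv_nonneg_of_le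
    (f := fun t => 1 - t ^ 2 / 2 + t ^ 4 / 24 - cos t) (by fun_prop) (fun y hy => ?_) hx
  · simpa using hmono
  · simp (disch := fun_prop) only [deriv_fun_sub, deriv_fun_add, deriv_const', deriv_div_const,
      deriv_fun_pow, deriv_id'', deriv_cos']
    norm_num
    linarith [sin_ge_sub_cube hy.le]

theorem sin_le_taylor_quintic {x : ℝ} (hx : 0 ≤ x) : sin x ≤ x - x ^ 3 / 6 + x ^ 5 / 120 := by
  have hmono := le_of_deriv_nonneg_of_le
    (f := fun t => t - t ^ 3 / 6 + t ^ 5 / 120 - sin t) (by fun_prop) (fun y hy => ?_) hx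
  · simpa using hmono
  · simp (disch := fun_prop) only [deriv_fun_sub, deriv_fun_add, deriv_div_const,
      deriv_fun_pow, deriv_id'', Real.deriv_sin]
    norm_num
    linarith [cos_le_taylor_quartic hy.le]

theorem sin_le_mul_exp_of_le {x : ℝ} (hx₀ : 0 ≤ x) (hx : x ≤ 27 / 10) :
    sin x ≤ x * exp (-x ^ 2 / 6) := by
  have hexp : (1 - x ^ 2 / 24) ^ 4 ≤ exp (-x ^ 2 / 6) := by
    have := one_sub_div_pow_le_exp_neg (n := 4) (t := x ^ 2 / 6) (by push_cast; nlinarith)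
    rw [neg_div]
    convert this using 2
    ring
  -- `(1 - x²/24)⁴ - (1 - x²/6 + x⁴/120) = x⁴ (1/480 - x²/3456 + x⁴/331776)`
  have hpoly : x - x ^ 3 / 6 + x ^ 5 / 120 ≤ x * (1 - x ^ 2 / 24) ^ 4 := by
    have ht : x ^ 2 ≤ 729 / 100 := by nlinarith
    have : 0 ≤ 1 / 480 - x ^ 2 / 3456 + x ^ 4 / 331776 := by
      nlinarith [mul_nonneg (sub_nonneg.2 ht) (sq_nonneg x)]
    nlinarith [mul_nonneg (pow_nonneg hx₀ 5) this]
  calc sin x ≤ x - x ^ 3 / 6 + x ^ 5 / 120 := sin_le_taylor_quintic hx₀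
    _ ≤ x * (1 - x ^ 2 / 24) ^ 4 := hpoly
    _ ≤ x * exp (-x ^ 2 / 6) := mul_le_mul_of_nonneg_left hexp hx₀

theorem sin_le_mul_exp_of_ge {x : ℝ} (hx : 27 / 10 ≤ x) (hxπ : x ≤ π) :
    sin x ≤ x * exp (-x ^ 2 / 6) := by
  have hπ := pi_lt_d4
  have hsin : sin x ≤ π - x := by
    rw [← sin_pi_sub]
    exact sin_le (by linarith)
  have hexp : 17 / 100 ≤ exp (-x ^ 2 / 6) :=
    calc (17 / 100 : ℝ) ≤ (1 - 3.1416 ^ 2 / 120) ^ 20 := by norm_num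
      _ ≤ (1 - x ^ 2 / 120) ^ 20 := pow_le_pow_left₀ (by norm_num) (by nlinarith) 20
      _ = (1 - x ^ 2 / 6 / (20 : ℕ)) ^ 20 := by ring
      _ ≤ exp (-(x ^ 2 / 6)) := one_sub_div_pow_le_exp_neg (by push_cast; nlinarith)
      _ = exp (-x ^ 2 / 6) := by rw [neg_div]
  nlinarith

theorem sin_le_mul_exp_neg_sq_div_six {x : ℝ} (hx₀ : 0 ≤ x) (hxπ : x ≤ π) :
    sin x ≤ x * exp (-x ^ 2 / 6) := by
  rcases le_total x (27 / 10) with hx | hx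
  · exact sin_le_mul_exp_of_le hx₀ hx
  · exact sin_le_mul_exp_of_ge hx hxπ

theorem two_mul_one_sub_cos_div_sq (s : ℝ) :
    2 * (1 - cos s) / s ^ 2 = (sin (s / 2) / (s / 2)) ^ 2 := by
  rw [div_pow, sin_sq_eq_half_sub, mul_div_cancel₀ s two_ne_zero]
  ring

/-- For `0 ≤ s ≤ 2π`, `0 ≤ 2(1 − cos s)/s² ≤ e^{−s²/12}`, where `2(1 − cos s)/s²`
is assigned its limiting value `1` at `s = 0`. -/
theorem char_triangular_bound (s : ℝ) (h0 : 0 ≤ s) (h2 : s ≤ 2 * Real.pi) :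
    0 ≤ (if s = 0 then (1 : ℝ) else 2 * (1 - Real.cos s) / s ^ 2) ∧
      (if s = 0 then (1 : ℝ) else 2 * (1 - Real.cos s) / s ^ 2) ≤
        Real.exp (-(s ^ 2) / 12) := by
  rcases h0.eq_or_lt with rfl | hs
  · simp
  rw [if_neg hs.ne', two_mul_one_sub_cos_div_sq]
  have hx : 0 < s / 2 := by positivity
  have hsin : 0 ≤ sin (s / 2) := sin_nonneg_of_nonneg_of_le_pi hx.le (by linarith)
  have hbound : sin (s / 2) / (s / 2) ≤ exp (-(s / 2) ^ 2 / 6) := by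
    rw [div_le_iff₀ hx, mul_comm]
    exact sin_le_mul_exp_neg_sq_div_six hx.le (by linarith)
  refine ⟨by positivity, ?_⟩
  calc (sin (s / 2) / (s / 2)) ^ 2 ≤ exp (-(s / 2) ^ 2 / 6) ^ 2 :=
        pow_le_pow_left₀ (by positivity) hbound 2
    _ = exp (-s ^ 2 / 12) := by rw [← exp_nat_mul]; ring_nf
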